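/- arXiv:1702.08031 — 3 statements merged into one kernel-verified Lean document; each statement's English description precedes it below -/
import Mathlib

section
/- Let $0 < \alpha < \beta$, and suppose $u, f : \mathbb{R} \to \mathbb{R}$ are bounded continuous with $f$ nonnegative and nondecreasing, and $u(t) \leq f(t) + \alpha\int_0^\infty e^{-\beta\tau} u(t-\tau)\,d\tau$ for all $t$, with $u \geq 0$. Then $u(t) \leq f(t) + \alpha \int_0^\infty e^{-(\beta-\alpha)\tau} f(t-\tau)\,d\tau \leq \frac{\beta}{\beta-\alpha} f(t)$ for all $t$. -/
/-!
Write `K_b h (t) = ∫₀^∞ e^{-bτ} h (t - τ) dτ`. Fubini over the triangle `0 < τ < r` gives the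
resolvent identity `α K_β (K_{β-α} f) = K_{β-α} f - K_β f`, so `w = f + α K_{β-α} f` solves
`w = f + α K_β w` exactly. The difference `v = u - w` then satisfies
`v ≤ α K_β v ≤ (α / β) sup v`, and `α < β` forces `sup v ≤ 0`. The second inequality is
`K_{β-α} f (t) ≤ f t / (β - α)`, as `f (t - τ) ≤ f t` for nondecreasing `f`.
-/

open MeasureTheory Set Real

lemma integral_exp_neg_mul_Ioi_zero {b : ℝ} (hb : 0 < b) :
    ∫ τ in Ioi (0:ℝ), exp (-b * τ) = 1 / b := by
  rw [integral_exp_mul_Ioi (neg_lt_zero.mpr hb)]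
  field_simp
  simp

lemma integral_exp_neg_mul_Ioo_zero {b : ℝ} (hb : b ≠ 0) {r : ℝ} (hr : 0 ≤ r) :
    ∫ τ in Ioo 0 r, exp (-b * τ) = (1 - exp (-b * r)) / b := by
  rw [← integral_Ioc_eq_integral_Ioo, ← intervalIntegral.integral_of_le hr,
    intervalIntegral.integral_comp_mul_left (fun x => exp x) (neg_ne_zero.mpr hb), integral_exp]
  simp only [mul_zero, exp_zero, smul_eq_mul]
  field_simp
  ring

lemma setIntegral_Ioi_comp_add_right (g : ℝ → ℝ) (a τ : ℝ) :
    ∫ x in Ioi a, g (x + τ) = ∫ y in Ioi (a + τ), g y := by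
  simpa using (measurePreserving_add_right volume τ).setIntegral_preimage_emb
    (measurableEmbedding_addRight τ) g (Ioi (a + τ))

noncomputable def expConv (b : ℝ) (h : ℝ → ℝ) (t : ℝ) : ℝ :=
  ∫ τ in Ioi (0:ℝ), exp (-b * τ) * h (t - τ)

section

variable {b C : ℝ} {h : ℝ → ℝ}

lemma norm_exp_neg_mul_mul_le (hC : ∀ s, |h s| ≤ C) (t τ : ℝ) :
    ‖exp (-b * τ) * h (t - τ)‖ ≤ C * exp (-b * τ) := by
  rw [norm_mul, norm_of_nonneg (exp_pos _).le, mul_comm, Real.norm_eq_abs]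
  exact mul_le_mul_of_nonneg_right (hC _) (exp_pos _).le

lemma integrableOn_exp_neg_mul_mul_comp_sub (hb : 0 < b) (hh : Continuous h)
    (hC : ∀ s, |h s| ≤ C) (t : ℝ) :
    IntegrableOn (fun τ => exp (-b * τ) * h (t - τ)) (Ioi 0) :=
  ((exp_neg_integrableOn_Ioi 0 hb).const_mul C).mono'
    (by fun_prop : Continuous fun τ => exp (-b * τ) * h (t - τ)).aestronglyMeasurable
    (Filter.Eventually.of_forall (norm_exp_neg_mul_mul_le hC t))

lemma expConv_le_div (hb : 0 < b) (hh : Continuous h) (hC : ∀ s, |h s| ≤ C) {t M : ℝ}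
    (hM : ∀ s ≤ t, h s ≤ M) : expConv b h t ≤ M / b :=
  calc expConv b h t ≤ ∫ τ in Ioi 0, M * exp (-b * τ) := by
        refine setIntegral_mono_on (integrableOn_exp_neg_mul_mul_comp_sub hb hh hC t)
          ((exp_neg_integrableOn_Ioi 0 hb).const_mul M) measurableSet_Ioi fun τ hτ => ?_
        rw [mul_comm M]
        exact mul_le_mul_of_nonneg_left (hM _ (by linarith [mem_Ioi.mp hτ])) (exp_pos _).le
    _ = M / b := by rw [integral_const_mul, integral_exp_neg_mul_Ioi_zero hb, mul_one_div]

lemma abs_expConv_le (hb : 0 < b) (hC : ∀ s, |h s| ≤ C) (t : ℝ) :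
    |expConv b h t| ≤ C / b := by
  rw [← Real.norm_eq_abs, ← mul_one_div, ← integral_exp_neg_mul_Ioi_zero hb,
    ← integral_const_mul]
  exact norm_integral_le_of_norm_le ((exp_neg_integrableOn_Ioi 0 hb).const_mul C)
    (Filter.Eventually.of_forall (norm_exp_neg_mul_mul_le hC t))

lemma continuous_expConv (hb : 0 < b) (hh : Continuous h) (hC : ∀ s, |h s| ≤ C) :
    Continuous (expConv b h) :=
  continuous_of_dominated (fun t => (integrableOn_exp_neg_mul_mul_comp_sub hb hh hC t).1)
    (fun t => Filter.Eventually.of_forall (norm_exp_neg_mul_mul_le hC t))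
    ((exp_neg_integrableOn_Ioi 0 hb).const_mul C)
    (Filter.Eventually.of_forall fun τ => by fun_prop)

lemma expConv_sub {f g : ℝ → ℝ} {D : ℝ} (hb : 0 < b) (hf : Continuous f)
    (hfC : ∀ s, |f s| ≤ C) (hg : Continuous g) (hgD : ∀ s, |g s| ≤ D) (t : ℝ) :
    expConv b (f - g) t = expConv b f t - expConv b g t := by
  simp only [expConv, Pi.sub_apply, mul_sub]
  exact integral_sub (integrableOn_exp_neg_mul_mul_comp_sub hb hf hfC t)
    (integrableOn_exp_neg_mul_mul_comp_sub hb hg hgD t)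

lemma expConv_add_const_mul {f g : ℝ → ℝ} {D : ℝ} (hb : 0 < b) (hf : Continuous f)
    (hfC : ∀ s, |f s| ≤ C) (hg : Continuous g) (hgD : ∀ s, |g s| ≤ D) (a t : ℝ) :
    expConv b (fun s => f s + a * g s) t = expConv b f t + a * expConv b g t := by
  simp only [expConv, mul_add, mul_left_comm _ a]
  rw [integral_add (integrableOn_exp_neg_mul_mul_comp_sub hb hf hfC t)
    ((integrableOn_exp_neg_mul_mul_comp_sub hb hg hgD t).const_mul a), integral_const_mul]

end

lemma integrable_indicator_lt_exp_kernel {a c C : ℝ} {f : ℝ → ℝ} (ha : 0 < a) (hc : 0 < c)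
    (hf : Continuous f) (hC : ∀ s, |f s| ≤ C) (t : ℝ) :
    Integrable ({p : ℝ × ℝ | p.1 < p.2}.indicator
        fun p => exp (-a * p.1) * (exp (-c * p.2) * f (t - p.2)))
      ((volume.restrict (Ioi 0)).prod (volume.restrict (Ioi 0))) := by
  refine (((exp_neg_integrableOn_Ioi 0 ha).const_mul C).mul_prod
    (exp_neg_integrableOn_Ioi 0 hc)).mono'
    ((by fun_prop : Continuous fun p : ℝ × ℝ => exp (-a * p.1) * (exp (-c * p.2) * f (t - p.2)))
      |>.aestronglyMeasurable.indicator (measurableSet_lt measurable_fst measurable_snd))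
    (Filter.Eventually.of_forall fun p => (norm_indicator_le_norm_self _ p).trans ?_)
  rw [norm_mul, norm_of_nonneg (exp_pos _).le]
  calc _ ≤ exp (-a * p.1) * (C * exp (-c * p.2)) :=
        mul_le_mul_of_nonneg_left (norm_exp_neg_mul_mul_le hC t p.2) (exp_pos _).le
    _ = _ := by ring

theorem sub_mul_expConv_expConv {b c C : ℝ} {f : ℝ → ℝ} (hc : 0 < c) (hcb : c < b)
    (hf : Continuous f) (hC : ∀ s, |f s| ≤ C) (t : ℝ) :
    (b - c) * expConv b (expConv c f) t = expConv c f t - expConv b f t := by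
  have ha : 0 < b - c := sub_pos.mpr hcb
  let G : ℝ × ℝ → ℝ := fun p => exp (-(b - c) * p.1) * (exp (-c * p.2) * f (t - p.2))
  let F : ℝ × ℝ → ℝ := {p | p.1 < p.2}.indicator G
  -- substitute `r = τ + σ` in the inner integral of `K_b (K_c f)`
  have h_slice_τ : ∀ τ ∈ Ioi (0:ℝ),
      exp (-b * τ) * expConv c f (t - τ) = ∫ r in Ioi 0, F (τ, r) := by
    intro τ hτ
    have hF : ∀ r, F (τ, r) = (Ioi τ).indicator (fun r => G (τ, r)) r := fun r => by
      simp [F, Set.indicator_apply]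
    simp_rw [hF]
    rw [setIntegral_indicator measurableSet_Ioi, Ioi_inter_Ioi, max_eq_right (le_of_lt hτ),
      ← zero_add τ, ← setIntegral_Ioi_comp_add_right, expConv, ← integral_const_mul]
    congr 1 with σ
    simp only [G, sub_add_eq_sub_sub, ← mul_assoc, ← exp_add]
    ring_nf
  have h_slice_r : ∀ r ∈ Ioi (0:ℝ), ∫ τ in Ioi 0, F (τ, r) =
      (exp (-c * r) * f (t - r) - exp (-b * r) * f (t - r)) / (b - c) := by
    intro r hr
    have hF : ∀ τ, F (τ, r) = (Iio r).indicator (fun τ => G (τ, r)) τ := fun τ => by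
      simp [F, Set.indicator_apply]
    simp_rw [hF]
    rw [setIntegral_indicator measurableSet_Iio, Ioi_inter_Iio]
    simp only [G]
    rw [integral_mul_const, integral_exp_neg_mul_Ioo_zero ha.ne' (le_of_lt hr),
      show exp (-b * r) = exp (-(b - c) * r) * exp (-c * r) by rw [← exp_add]; ring_nf]
    ring
  calc (b - c) * expConv b (expConv c f) t
      = (b - c) * ∫ r in Ioi 0, ∫ τ in Ioi 0, F (τ, r) := by
        rw [expConv, setIntegral_congr_fun measurableSet_Ioi h_slice_τ,
          integral_integral_swap (f := fun τ r => F (τ, r))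
            (integrable_indicator_lt_exp_kernel ha hc hf hC t)]
    _ = (b - c) * ∫ r in Ioi 0,
          (exp (-c * r) * f (t - r) - exp (-b * r) * f (t - r)) / (b - c) := by
        rw [setIntegral_congr_fun measurableSet_Ioi h_slice_r]
    _ = expConv c f t - expConv b f t := by
        rw [integral_div, integral_sub (integrableOn_exp_neg_mul_mul_comp_sub hc hf hC t)
          (integrableOn_exp_neg_mul_mul_comp_sub (hc.trans hcb) hf hC t),
          mul_div_cancel₀ _ ha.ne']
        rfl

theorem expConv_add_mul_expConv_sub {α β C : ℝ} {f : ℝ → ℝ} (hα : 0 < α) (hαβ : α < β)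
    (hf : Continuous f) (hC : ∀ s, |f s| ≤ C) (t : ℝ) :
    expConv β (fun s => f s + α * expConv (β - α) f s) t = expConv (β - α) f t := by
  have hc : 0 < β - α := sub_pos.mpr hαβ
  have h := sub_mul_expConv_expConv hc (sub_lt_self β hα) hf hC t
  rw [sub_sub_cancel] at h
  rw [expConv_add_const_mul (hα.trans hαβ) hf hC (continuous_expConv hc hf hC)
    (abs_expConv_le hc hC), h]
  ring

theorem nonpos_of_le_mul_expConv {α β C : ℝ} {v : ℝ → ℝ} (hα : 0 ≤ α) (hαβ : α < β)
    (hv : Continuous v) (hC : ∀ s, |v s| ≤ C) (hv_le : ∀ t, v t ≤ α * expConv β v t)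
    (t : ℝ) : v t ≤ 0 := by
  have hβ : 0 < β := hα.trans_lt hαβ
  have hbdd : BddAbove (range v) :=
    ⟨C, by rintro _ ⟨s, rfl⟩; exact (le_abs_self _).trans (hC s)⟩
  set S := ⨆ s, v s
  have hS : S ≤ α / β * S := ciSup_le fun s => calc
    v s ≤ α * expConv β v s := hv_le s
    _ ≤ α * (S / β) := mul_le_mul_of_nonneg_left
        (expConv_le_div hβ hv hC fun r _ => le_ciSup hbdd r) hα
    _ = α / β * S := by ring
  have hαβ' : α / β < 1 := (div_lt_one hβ).mpr hαβ
  exact (le_ciSup hbdd t).trans (by nlinarith)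

theorem le_of_le_add_mul_expConv {α β C D : ℝ} {f u w : ℝ → ℝ} (hα : 0 ≤ α) (hαβ : α < β)
    (hu : Continuous u) (huC : ∀ s, |u s| ≤ C) (hw : Continuous w) (hwD : ∀ s, |w s| ≤ D)
    (hu_le : ∀ t, u t ≤ f t + α * expConv β u t)
    (hw_ge : ∀ t, f t + α * expConv β w t ≤ w t) (t : ℝ) : u t ≤ w t := by
  have hv_le : ∀ s, (u - w) s ≤ α * expConv β (u - w) s := fun s => by
    rw [expConv_sub (hα.trans_lt hαβ) hu huC hw hwD, mul_sub, Pi.sub_apply]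
    linarith [hu_le s, hw_ge s]
  exact sub_nonpos.mp <| nonpos_of_le_mul_expConv hα hαβ (hu.sub hw)
    (fun s => (abs_sub _ _).trans (add_le_add (huC s) (hwD s))) hv_le t

theorem stmt3_general (α β : ℝ) (hα : 0 < α) (hαβ : α < β)
    (u f : ℝ → ℝ) (huc : Continuous u) (hub : ∃ C, ∀ t, |u t| ≤ C)
    (hfc : Continuous f) (hfb : ∃ C, ∀ t, |f t| ≤ C)
    (hfmono : Monotone f)
    (hineq : ∀ t, u t ≤ f t + α * ∫ τ in Ioi (0:ℝ), Real.exp (-β * τ) * u (t - τ)) :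
    ∀ t, u t ≤ f t + α * ∫ τ in Ioi (0:ℝ), Real.exp (-(β - α) * τ) * f (t - τ) ∧
      f t + (α * ∫ τ in Ioi (0:ℝ), Real.exp (-(β - α) * τ) * f (t - τ))
        ≤ (β / (β - α)) * f t := by
  obtain ⟨Cu, huC⟩ := hub
  obtain ⟨C, hC⟩ := hfb
  have hc : 0 < β - α := sub_pos.mpr hαβ
  have hw : Continuous fun s => f s + α * expConv (β - α) f s :=
    hfc.add (continuous_const.mul (continuous_expConv hc hfc hC))
  have hwB : ∀ s, |f s + α * expConv (β - α) f s| ≤ C + α * (C / (β - α)) := fun s =>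
    (abs_add_le _ _).trans <| add_le_add (hC s) <| by
      rw [abs_mul, abs_of_pos hα]
      exact mul_le_mul_of_nonneg_left (abs_expConv_le hc hC s) hα.le
  intro t
  refine ⟨le_of_le_add_mul_expConv hα.le hαβ huc huC hw hwB hineq
    (fun s => by rw [expConv_add_mul_expConv_sub hα hαβ hfc hC s]) t, ?_⟩
  calc f t + α * expConv (β - α) f t ≤ f t + α * (f t / (β - α)) := by
        gcongr
        exact expConv_le_div hc hfc hC fun s hs => hfmono hs
    _ = β / (β - α) * f t := by
        field_simp
        ring

theorem stmt3 (α β : ℝ) (hα : 0 < α) (hαβ : α < β)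
    (u f : ℝ → ℝ) (huc : Continuous u) (hub : ∃ C, ∀ t, |u t| ≤ C)
    (hfc : Continuous f) (hfb : ∃ C, ∀ t, |f t| ≤ C)
    (hfpos : ∀ t, 0 ≤ f t) (hfmono : Monotone f) (hupos : ∀ t, 0 ≤ u t)
    (hineq : ∀ t, u t ≤ f t + α * ∫ τ in Ioi (0:ℝ), Real.exp (-β * τ) * u (t - τ)) :
    ∀ t, u t ≤ f t + α * ∫ τ in Ioi (0:ℝ), Real.exp (-(β - α) * τ) * f (t - τ) ∧
      f t + (α * ∫ τ in Ioi (0:ℝ), Real.exp (-(β - α) * τ) * f (t - τ))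
        ≤ (β / (β - α)) * f t :=
  stmt3_general α β hα hαβ u f huc hub hfc hfb hfmono hineq
end

section
/- Let $X$ be a Banach space and $u : \mathbb{R} \to X$ bounded, and continuously differentiable with bounded uniformly continuous derivative. Then the Yosida approximation $(\partial_t)_\lambda u(t) = \frac{1}{\lambda}\left(u(t) - \frac{1}{\lambda}\int_0^\infty e^{-\tau/\lambda} u(t-\tau)\,d\tau\right)$ converges to $u'(t)$ uniformly in $t$ as $\lambda \to 0^+$. -/
/-!
Since `∫₀^∞ e^{-τ/λ} dτ = λ` and `∫₀^∞ τ e^{-τ/λ} dτ = λ²`, the error of the Yosida approximation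
is `λ⁻² ∫₀^∞ e^{-τ/λ} (u t - u (t - τ) - τ u' t) dτ`. If `‖u'‖ ≤ C` and `u'` oscillates by less
than `η` on scale `δ`, the mean value theorem bounds the Taylor remainder by `η τ + (2C/δ) τ²`,
and integrating against the moments `∫₀^∞ τⁿ e^{-τ/λ} dτ = n! λⁿ⁺¹` bounds the error by
`η + 4Cλ/δ`, uniformly in `t`.
-/

open MeasureTheory Set Real

lemma integrableOn_pow_mul_exp_neg_div (n : ℕ) {lam : ℝ} (hlam : 0 < lam) :
    IntegrableOn (fun τ => τ ^ n * exp (-τ / lam)) (Ioi 0) := by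
  refine (integrableOn_rpow_mul_exp_neg_mul_rpow (s := n) (neg_one_lt_zero.trans_le n.cast_nonneg)
    one_pos (inv_pos.mpr hlam)).congr_fun (fun τ _ => ?_) measurableSet_Ioi
  simp only [rpow_natCast, rpow_one, div_eq_inv_mul, neg_mul, mul_neg]

open Nat in
lemma integral_pow_mul_exp_neg_div (n : ℕ) {lam : ℝ} (hlam : 0 < lam) :
    ∫ τ in Ioi 0, τ ^ n * exp (-τ / lam) = n ! * lam ^ (n + 1) := by
  have h := integral_rpow_mul_exp_neg_mul_Ioi (a := n + 1) (by positivity) (inv_pos.mpr hlam)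
  rw [one_div, inv_inv, add_sub_cancel_right, Gamma_nat_eq_factorial, ← Nat.cast_add_one,
    rpow_natCast] at h
  rw [mul_comm, ← h]
  refine setIntegral_congr_fun measurableSet_Ioi (fun τ _ => ?_)
  simp only [rpow_natCast, div_eq_inv_mul, mul_neg]

section

variable {X : Type*} [NormedAddCommGroup X] [NormedSpace ℝ X]

noncomputable def yosidaApprox (lam : ℝ) (u : ℝ → X) (t : ℝ) : X :=
  (1 / lam) • (u t - (1 / lam) • ∫ τ in Ioi 0, exp (-τ / lam) • u (t - τ))

lemma norm_sub_sub_smul_le_of_norm_deriv_sub_le {u u' : ℝ → X}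
    (hu : ∀ s, HasDerivAt u (u' s) s) {x y B : ℝ} (hB : ∀ s ∈ uIcc x y, ‖u' s - u' x‖ ≤ B) :
    ‖u y - u x - (y - x) • u' x‖ ≤ B * |y - x| := by
  have hderiv : ∀ s ∈ uIcc x y,
      HasDerivWithinAt (fun s => u s - s • u' x) (u' s - u' x) (uIcc x y) s := fun s _ => by
    simpa using ((hu s).fun_sub ((hasDerivAt_id s).smul_const (u' x))).hasDerivWithinAt
  have := (convex_uIcc x y).norm_image_sub_le_of_norm_hasDerivWithin_le hderiv hB
    left_mem_uIcc right_mem_uIcc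
  rw [Real.norm_eq_abs] at this
  convert this using 2
  rw [sub_smul]
  abel

lemma norm_sub_sub_smul_le {u u' : ℝ → X} (hu : ∀ s, HasDerivAt u (u' s) s) {C δ η : ℝ}
    (hC : ∀ s, ‖u' s‖ ≤ C) (hδ : 0 < δ) (hη : ∀ s s', dist s s' < δ → dist (u' s) (u' s') < η)
    (x y : ℝ) :
    ‖u y - u x - (y - x) • u' x‖ ≤ η * |y - x| + 2 * C / δ * (y - x) ^ 2 := by
  have hC0 : 0 ≤ C := (norm_nonneg _).trans (hC 0)
  have hη0 : 0 ≤ η := dist_nonneg.trans_lt (hη x x (by simpa using hδ)) |>.le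
  rcases lt_or_ge |y - x| δ with hnear | hfar
  · have hB : ∀ s ∈ uIcc x y, ‖u' s - u' x‖ ≤ η := fun s hs => by
      rw [← dist_eq_norm]
      refine (hη s x ?_).le
      rw [Real.dist_eq]
      exact (abs_sub_left_of_mem_uIcc hs).trans_lt hnear
    have := norm_sub_sub_smul_le_of_norm_deriv_sub_le hu hB
    nlinarith [div_nonneg (mul_nonneg zero_le_two hC0) hδ.le, sq_nonneg (y - x)]
  · have hB : ∀ s ∈ uIcc x y, ‖u' s - u' x‖ ≤ 2 * C := fun s _ => by
      linarith [norm_sub_le (u' s) (u' x), hC s, hC x]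
    have := norm_sub_sub_smul_le_of_norm_deriv_sub_le hu hB
    have hquad : 2 * C * |y - x| ≤ 2 * C / δ * (y - x) ^ 2 := by
      rw [← sq_abs, div_mul_eq_mul_div, le_div_iff₀ hδ]
      nlinarith [mul_le_mul_of_nonneg_left hfar (by positivity : 0 ≤ 2 * C * |y - x|)]
    nlinarith [abs_nonneg (y - x)]

lemma integrableOn_exp_neg_div_smul_comp_sub {u : ℝ → X} (hu : Continuous u) {C : ℝ}
    (hC : ∀ s, ‖u s‖ ≤ C) {lam : ℝ} (hlam : 0 < lam) (t : ℝ) :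
    IntegrableOn (fun τ => exp (-τ / lam) • u (t - τ)) (Ioi 0) := by
  have hexp := integrableOn_pow_mul_exp_neg_div 0 hlam
  simp only [pow_zero, one_mul] at hexp
  exact hexp.smul_bdd C (hu.comp (continuous_sub_left t)).aestronglyMeasurable
    (Filter.Eventually.of_forall fun τ => hC (t - τ))

lemma yosidaApprox_sub_eq_integral [CompleteSpace X] {u : ℝ → X} (hu : Continuous u) {C : ℝ}
    (hC : ∀ s, ‖u s‖ ≤ C) {lam : ℝ} (hlam : 0 < lam) (t : ℝ) (v : X) :
    yosidaApprox lam u t - v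
      = (1 / lam ^ 2) • ∫ τ in Ioi 0, exp (-τ / lam) • (u t - u (t - τ) - τ • v) := by
  have h0 := integrableOn_pow_mul_exp_neg_div 0 hlam
  have h1 := integrableOn_pow_mul_exp_neg_div 1 hlam
  have m0 := integral_pow_mul_exp_neg_div 0 hlam
  have m1 := integral_pow_mul_exp_neg_div 1 hlam
  simp only [pow_zero, pow_one, one_mul, Nat.factorial_zero, Nat.factorial_one, Nat.cast_one,
    zero_add] at h0 h1 m0 m1
  have hI := integrableOn_exp_neg_div_smul_comp_sub hu hC hlam t
  have hsplit : (fun τ => exp (-τ / lam) • (u t - u (t - τ) - τ • v))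
      = fun τ => (exp (-τ / lam) • u t - exp (-τ / lam) • u (t - τ)) - (τ * exp (-τ / lam)) • v := by
    funext τ
    rw [smul_sub, smul_sub, smul_smul, mul_comm]
  have hI' : IntegrableOn (fun τ => exp (-τ / lam) • u t - exp (-τ / lam) • u (t - τ)) (Ioi 0) :=
    (h0.smul_const _).sub hI
  rw [yosidaApprox, hsplit, integral_sub hI' (h1.smul_const _), integral_sub (h0.smul_const _) hI,
    integral_smul_const, integral_smul_const, m0, m1]
  match_scalars <;> field_simp

lemma norm_smul_integral_exp_neg_div_smul_le {f : ℝ → X} {a b lam : ℝ} (hlam : 0 < lam)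
    (hf : ∀ τ ∈ Ioi (0 : ℝ), ‖f τ‖ ≤ a * τ + b * τ ^ 2) :
    ‖(1 / lam ^ 2) • ∫ τ in Ioi 0, exp (-τ / lam) • f τ‖ ≤ a + 2 * b * lam := by
  have h1 := integrableOn_pow_mul_exp_neg_div 1 hlam
  have h2 := integrableOn_pow_mul_exp_neg_div 2 hlam
  have m1 := integral_pow_mul_exp_neg_div 1 hlam
  have m2 := integral_pow_mul_exp_neg_div 2 hlam
  simp only [pow_one] at h1 m1
  have hbound : ∀ᵐ τ ∂volume.restrict (Ioi 0),
      ‖exp (-τ / lam) • f τ‖ ≤ a * (τ * exp (-τ / lam)) + b * (τ ^ 2 * exp (-τ / lam)) := by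
    filter_upwards [ae_restrict_mem measurableSet_Ioi] with τ hτ
    rw [norm_smul, Real.norm_of_nonneg (exp_pos _).le]
    calc exp (-τ / lam) * ‖f τ‖ ≤ exp (-τ / lam) * (a * τ + b * τ ^ 2) := by
          gcongr
          exact hf τ hτ
      _ = a * (τ * exp (-τ / lam)) + b * (τ ^ 2 * exp (-τ / lam)) := by ring
  calc ‖(1 / lam ^ 2) • ∫ τ in Ioi 0, exp (-τ / lam) • f τ‖
      = 1 / lam ^ 2 * ‖∫ τ in Ioi 0, exp (-τ / lam) • f τ‖ := by
        rw [norm_smul, Real.norm_of_nonneg (by positivity)]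
    _ ≤ 1 / lam ^ 2 *
        ∫ τ in Ioi 0, a * (τ * exp (-τ / lam)) + b * (τ ^ 2 * exp (-τ / lam)) := by
        gcongr
        exact norm_integral_le_of_norm_le ((h1.const_mul a).add (h2.const_mul b)) hbound
    _ = a + 2 * b * lam := by
        rw [integral_add (h1.const_mul a) (h2.const_mul b), integral_const_mul,
          integral_const_mul, m1, m2]
        simp only [Nat.factorial]
        field_simp
        ring

end

theorem stmt6 (X : Type*) [NormedAddCommGroup X] [NormedSpace ℝ X] [CompleteSpace X]
    (u u' : ℝ → X) (hub : ∃ C, ∀ t, ‖u t‖ ≤ C)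
    (hderiv : ∀ t, HasDerivAt u (u' t) t)
    (hu'c : UniformContinuous u') (hu'b : ∃ C, ∀ t, ‖u' t‖ ≤ C) :
    ∀ ε > (0:ℝ), ∃ lam₀ > (0:ℝ), ∀ lam : ℝ, 0 < lam → lam < lam₀ →
      ∀ t : ℝ,
        ‖(1 / lam) • (u t - (1 / lam) • ∫ τ in Ioi (0:ℝ), Real.exp (-τ / lam) • u (t - τ))
          - u' t‖ ≤ ε := by
  obtain ⟨Cu, hCu⟩ := hub
  obtain ⟨C, hC⟩ := hu'b
  have hC0 : 0 ≤ C := (norm_nonneg _).trans (hC 0)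
  have hu : Continuous u := continuous_iff_continuousAt.2 fun s => (hderiv s).continuousAt
  intro ε hε
  obtain ⟨δ, hδ, hη⟩ := Metric.uniformContinuous_iff.1 hu'c (ε / 2) (half_pos hε)
  refine ⟨ε * δ / (8 * (C + 1)), by positivity, fun lam hlam hlam₀ t => ?_⟩
  have hremainder : ∀ τ ∈ Ioi (0 : ℝ),
      ‖u t - u (t - τ) - τ • u' t‖ ≤ ε / 2 * τ + 2 * C / δ * τ ^ 2 := fun τ hτ => by
    have := norm_sub_sub_smul_le hderiv hC hδ hη t (t - τ)
    rwa [sub_sub_cancel_left, abs_neg, abs_of_pos hτ, neg_sq, neg_smul, sub_neg_eq_add,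
      ← norm_neg, neg_add, neg_sub, ← sub_eq_add_neg] at this
  change ‖yosidaApprox lam u t - u' t‖ ≤ ε
  rw [yosidaApprox_sub_eq_integral hu hCu hlam t (u' t)]
  refine (norm_smul_integral_exp_neg_div_smul_le hlam hremainder).trans ?_
  rw [lt_div_iff₀ (by positivity)] at hlam₀
  have hsmall : 2 * (2 * C / δ) * lam ≤ ε / 2 := by
    rw [show 2 * (2 * C / δ) * lam = 4 * C * lam / δ by ring, div_le_iff₀ hδ]
    nlinarith
  linarith
end

section
/- Let $X$ be a Banach space, $\omega < 0$, $\lambda > 0$, $K_0, K_2 > 0$, $L_g \geq 0$ with $L_g + K_0 < -\omega$. Define $S_\lambda$ on bounded continuous $f : \mathbb{R} \to \mathbb{R}$ by $(S_\lambda f)(t) = \frac{K_0}{(1-\lambda(\omega+L_g))^2}\int_0^\infty \exp\left(\frac{(\omega+L_g)\tau}{1-\lambda(\omega+L_g)}\right)f(t-\tau)\,d\tau$. Then for $\lambda$ sufficiently small the operator $K_2\lambda I + S_\lambda$ has operator norm strictly less than $1$, and consequently any sequence of nonnegative bounded functions $(K_n)$ satisfying $K_{n+1} \leq K_2 + (K_2\lambda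 I + S_\lambda)K_n$ (pointwise) with $K_0$ bounded is uniformly bounded in $n$ and $t$. -/
/-!
Write `a = ω + Lg < -K₀ < 0` and `μ = 1 - λa ≥ 1`. The kernel of `S_λ` is `exp((a/μ)τ)`, whose
integral over `(0, ∞)` is `μ/(-a)`, so `‖S_λ‖ ≤ K₀/(μ(-a)) ≤ K₀/(-a) < 1`. Choosing `λ` with
`K₂λ < 1 - K₀/(-a)` makes `q = K₂λ + K₀/(-a) < 1` a bound for `K₂λI + S_λ`, and then the sup norms
`uₙ` of the iterates satisfy `uₙ₊₁ ≤ K₂ + q uₙ`, hence stay below `max u₀ (K₂/(1-q))`.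
-/

open MeasureTheory Set

lemma abs_le_iSup_abs {ι : Type*} {f : ι → ℝ} (hf : ∃ C, ∀ i, |f i| ≤ C) (i : ι) :
    |f i| ≤ ⨆ j, |f j| :=
  le_ciSup (let ⟨C, hC⟩ := hf; ⟨C, forall_mem_range.2 hC⟩) i

lemma abs_integral_exp_mul_mul_le {c C : ℝ} (hc : c < 0) {g : ℝ → ℝ} (hg : ∀ τ, |g τ| ≤ C) :
    |∫ τ in Ioi (0:ℝ), Real.exp (c * τ) * g τ| ≤ C / -c :=
  calc |∫ τ in Ioi (0:ℝ), Real.exp (c * τ) * g τ|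
      ≤ ∫ τ in Ioi (0:ℝ), C * Real.exp (c * τ) := by
        refine norm_integral_le_of_norm_le (f := fun τ => Real.exp (c * τ) * g τ)
          ((integrableOn_exp_mul_Ioi hc 0).const_mul C) (ae_of_all _ fun τ => ?_)
        rw [Real.norm_eq_abs, abs_mul, Real.abs_exp, mul_comm C]
        exact mul_le_mul_of_nonneg_left (hg τ) (Real.exp_pos _).le
    _ = C / -c := by
        rw [integral_const_mul, integral_exp_mul_Ioi hc, mul_zero, Real.exp_zero]
        ring

lemma abs_expKernel_integral_le {K₀ a lam C : ℝ} (hK₀ : 0 ≤ K₀) (ha : a < 0) (hlam : 0 ≤ lam)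
    {f : ℝ → ℝ} (hf : ∀ s, |f s| ≤ C) (t : ℝ) :
    |K₀ / (1 - lam * a) ^ 2 *
        ∫ τ in Ioi (0:ℝ), Real.exp (a * τ / (1 - lam * a)) * f (t - τ)| ≤ K₀ / -a * C := by
  set μ := 1 - lam * a
  have hμ : 1 ≤ μ := by nlinarith
  have hC : 0 ≤ C := (abs_nonneg _).trans (hf 0)
  have hint := abs_integral_exp_mul_mul_le (div_neg_of_neg_of_pos ha (by linarith : 0 < μ))
    (g := fun τ => f (t - τ)) fun τ => hf _
  simp only [mul_div_right_comm a] at hint ⊢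
  calc |K₀ / μ ^ 2 * ∫ τ in Ioi (0:ℝ), Real.exp (a / μ * τ) * f (t - τ)|
      ≤ K₀ / μ ^ 2 * (C / -(a / μ)) := by
        rw [abs_mul, abs_of_nonneg (by positivity)]
        gcongr
    _ = K₀ / -a * C / μ := by field_simp
    _ ≤ K₀ / -a * C := div_le_self (mul_nonneg (div_nonneg hK₀ (by linarith)) hC) hμ

lemma abs_add_expKernel_integral_le {K₀ K₂ a lam : ℝ} (hK₀ : 0 ≤ K₀) (hK₂ : 0 ≤ K₂)
    (ha : a < 0) (hlam : 0 ≤ lam) {f : ℝ → ℝ} (hf : ∃ C, ∀ s, |f s| ≤ C) (t : ℝ) :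
    |K₂ * lam * f t + K₀ / (1 - lam * a) ^ 2 *
        ∫ τ in Ioi (0:ℝ), Real.exp (a * τ / (1 - lam * a)) * f (t - τ)|
      ≤ (K₂ * lam + K₀ / -a) * ⨆ s, |f s| := by
  have hsup := abs_le_iSup_abs hf
  calc _ ≤ |K₂ * lam * f t| + K₀ / -a * ⨆ s, |f s| :=
        (abs_add_le _ _).trans (add_le_add_right (abs_expKernel_integral_le hK₀ ha hlam hsup t) _)
    _ ≤ K₂ * lam * (⨆ s, |f s|) + K₀ / -a * ⨆ s, |f s| := by
        rw [abs_mul, abs_of_nonneg (by positivity)]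
        gcongr
        exact hsup t
    _ = _ := by ring

lemma le_max_div_of_le_add_mul {u : ℕ → ℝ} {c q : ℝ} (hq₀ : 0 ≤ q) (hq₁ : q < 1)
    (hu : ∀ n, u (n + 1) ≤ c + q * u n) (n : ℕ) : u n ≤ max (u 0) (c / (1 - q)) := by
  induction n with
  | zero => exact le_max_left _ _
  | succ n ih =>
    have hc : c ≤ max (u 0) (c / (1 - q)) * (1 - q) :=
      (div_le_iff₀ (sub_pos.2 hq₁)).1 (le_max_right _ _)
    nlinarith [hu n, mul_le_mul_of_nonneg_left ih hq₀]

theorem stmt19_general (ω K₀ K₂ Lg : ℝ) (hK₀ : 0 < K₀) (hK₂ : 0 < K₂)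
    (hsmall : Lg + K₀ < -ω)
    (S : ℝ → (ℝ → ℝ) → (ℝ → ℝ))
    (hS : ∀ (lam : ℝ) (f : ℝ → ℝ) (t : ℝ),
        S lam f t = (K₀ / (1 - lam * (ω + Lg)) ^ 2) *
          ∫ τ in Ioi (0:ℝ), Real.exp ((ω + Lg) * τ / (1 - lam * (ω + Lg))) * f (t - τ)) :
    ∃ lam₀ > (0:ℝ), ∀ lam : ℝ, 0 < lam → lam < lam₀ →
      ∃ q : ℝ, 0 ≤ q ∧ q < 1 ∧
        (∀ f : ℝ → ℝ, Continuous f → (∃ C, ∀ t, |f t| ≤ C) →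
          (⨆ t : ℝ, |K₂ * lam * f t + S lam f t|) ≤ q * ⨆ t : ℝ, |f t|) ∧
        ∀ K : ℕ → ℝ → ℝ,
          (∀ n, Continuous (K n)) →
          (∀ n t, 0 ≤ K n t) →
          (∀ n, ∃ C, ∀ t, K n t ≤ C) →
          (∀ n t, K (n + 1) t ≤ K₂ + (K₂ * lam * K n t + S lam (K n) t)) →
          ∃ M : ℝ, ∀ n t, K n t ≤ M := by
  set a := ω + Lg
  have ha : a < 0 := by linarith
  have hr : K₀ / -a < 1 := (div_lt_one (by linarith)).2 (by linarith)
  refine ⟨(1 - K₀ / -a) / K₂, div_pos (by linarith) hK₂, fun lam hlam hlam₀ => ?_⟩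
  have hq₁ : K₂ * lam + K₀ / -a < 1 := by
    rw [lt_div_iff₀ hK₂] at hlam₀
    linarith
  have hq₀ : 0 ≤ K₂ * lam + K₀ / -a := by
    have : 0 ≤ K₀ / -a := div_nonneg hK₀.le (by linarith)
    positivity
  have hSq : ∀ f : ℝ → ℝ, (∃ C, ∀ t, |f t| ≤ C) →
      ∀ t, |K₂ * lam * f t + S lam f t| ≤ (K₂ * lam + K₀ / -a) * ⨆ s, |f s| := fun f hf t => by
    rw [hS]
    exact abs_add_expKernel_integral_le hK₀.le hK₂.le ha hlam.le hf t
  refine ⟨_, hq₀, hq₁, fun f _ hf => ciSup_le (hSq f hf), fun K _ hK₀ hKb hrec => ?_⟩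
  have hKb' : ∀ n, ∃ C, ∀ t, |K n t| ≤ C := fun n =>
    let ⟨C, hC⟩ := hKb n
    ⟨C, fun t => (abs_of_nonneg (hK₀ n t)).trans_le (hC t)⟩
  have hu : ∀ n, (⨆ t, |K (n + 1) t|) ≤ K₂ + (K₂ * lam + K₀ / -a) * ⨆ t, |K n t| :=
    fun n => ciSup_le fun t => by
      rw [abs_of_nonneg (hK₀ _ t)]
      linarith [hrec n t, le_abs_self (K₂ * lam * K n t + S lam (K n) t), hSq _ (hKb' n) t]
  exact ⟨_, fun n t => (le_abs_self _).trans <|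
    (abs_le_iSup_abs (hKb' n) t).trans (le_max_div_of_le_add_mul (u := fun n => ⨆ t, |K n t|) hq₀ hq₁ hu n)⟩

theorem stmt19 (ω K₀ K₂ Lg : ℝ) (hω : ω < 0) (hK₀ : 0 < K₀) (hK₂ : 0 < K₂)
    (hLg : 0 ≤ Lg) (hsmall : Lg + K₀ < -ω)
    (S : ℝ → (ℝ → ℝ) → (ℝ → ℝ))
    (hS : ∀ (lam : ℝ) (f : ℝ → ℝ) (t : ℝ),
        S lam f t = (K₀ / (1 - lam * (ω + Lg)) ^ 2) *
          ∫ τ in Ioi (0:ℝ), Real.exp ((ω + Lg) * τ / (1 - lam * (ω + Lg))) * f (t - τ)) :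
    ∃ lam₀ > (0:ℝ), ∀ lam : ℝ, 0 < lam → lam < lam₀ →
      ∃ q : ℝ, 0 ≤ q ∧ q < 1 ∧
        (∀ f : ℝ → ℝ, Continuous f → (∃ C, ∀ t, |f t| ≤ C) →
          (⨆ t : ℝ, |K₂ * lam * f t + S lam f t|) ≤ q * ⨆ t : ℝ, |f t|) ∧
        ∀ K : ℕ → ℝ → ℝ,
          (∀ n, Continuous (K n)) →
          (∀ n t, 0 ≤ K n t) →
          (∀ n, ∃ C, ∀ t, K n t ≤ C) →
          (∀ n t, K (n + 1) t ≤ K₂ + (K₂ * lam * K n t + S lam (K n) t)) →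
          ∃ M : ℝ, ∀ n t, K n t ≤ M :=
  stmt19_general ω K₀ K₂ Lg hK₀ hK₂ hsmall S hS
end
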